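/- arXiv:2306.13610 — 6 statements merged into one kernel-verified Lean document; each statement's English description precedes it below -/
import Mathlib

section
/- Let P : Cᵒᵖ → InfSL be a pure existential doctrine and let α be an element of the fibre P(A). Then α is a pure existential splitting if and only if for every product projection π_A : A×B → A and every element β of the fibre P(A×B), whenever α ≤ ∃_{π_A}(β) holds in P(A) there exists an arrow h : A → B such that α ≤ P_{⟨id_A,h⟩}(β). -/
open CategoryTheory MonoidalCategory CartesianMonoidalCategory Limits

universe w v u

/-- A **primary doctrine**: a functor `P : Cᵒᵖ → InfSL` from the opposite of a category `C`
with (chosen) finite products to the category of inf-semilattices with top element,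
presented concretely by its fibres and reindexing maps. -/
structure PrimaryDoctrine (C : Type u) [Category.{v} C] [CartesianMonoidalCategory C] where
  Fib : C → Type w
  [instSemilatticeInf : ∀ A : C, SemilatticeInf (Fib A)]
  [instOrderTop : ∀ A : C, OrderTop (Fib A)]
  reindex : ∀ {A B : C}, (A ⟶ B) → Fib B → Fib A
  reindex_id : ∀ (A : C) (a : Fib A), reindex (𝟙 A) a = a
  reindex_comp : ∀ {A B D : C} (f : A ⟶ B) (g : B ⟶ D) (d : Fib D),
      reindex (f ≫ g) d = reindex f (reindex g d)
  reindex_inf : ∀ {A B : C} (f : A ⟶ B) (x y : Fib B),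
      reindex f (x ⊓ y) = reindex f x ⊓ reindex f y
  reindex_top : ∀ {A B : C} (f : A ⟶ B), reindex f (⊤ : Fib B) = ⊤

attribute [instance] PrimaryDoctrine.instSemilatticeInf PrimaryDoctrine.instOrderTop

namespace PrimaryDoctrine

variable {C : Type u} [Category.{v} C] [CartesianMonoidalCategory C]

theorem reindex_mono (P : PrimaryDoctrine.{w} C) {A B : C} (f : A ⟶ B) {x y : P.Fib B}
    (h : x ≤ y) : P.reindex f x ≤ P.reindex f y := by
  have hxy : x ⊓ y = x := inf_eq_left.mpr h
  calc P.reindex f x = P.reindex f (x ⊓ y) := by rw [hxy]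
    _ = P.reindex f x ⊓ P.reindex f y := P.reindex_inf f x y
    _ ≤ P.reindex f y := inf_le_right

end PrimaryDoctrine

/-- A **pure existential doctrine**: a primary doctrine together with left adjoints to
reindexing along the product projections, satisfying the Beck–Chevalley condition and
the Frobenius reciprocity condition. -/
structure PureExistentialDoctrine (C : Type u) [Category.{v} C] [CartesianMonoidalCategory C]
    extends PrimaryDoctrine.{w} C where
  ex : ∀ (A B : C), Fib (A ⊗ B) → Fib A
  ex_adj : ∀ (A B : C) (β : Fib (A ⊗ B)) (α : Fib A),
      ex A B β ≤ α ↔ β ≤ reindex (fst A B) α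
  ex_bcc : ∀ {A' A : C} (f : A' ⟶ A) (B : C) (β : Fib (A ⊗ B)),
      ex A' B (reindex (f ▷ B) β) = reindex f (ex A B β)
  ex_frob : ∀ (A B : C) (α : Fib A) (β : Fib (A ⊗ B)),
      ex A B (reindex (fst A B) α ⊓ β) = α ⊓ ex A B β

/-- The **elementary structure** on a primary doctrine: fibered equalities `δ_A ∈ P(A × A)`
providing the prescribed left adjoints to reindexing along diagonals. -/
structure ElementaryStructure {C : Type u} [Category.{v} C] [CartesianMonoidalCategory C]
    (P : PrimaryDoctrine.{w} C) where
  delta : ∀ A : C, P.Fib (A ⊗ A)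
  delta_adj : ∀ (A : C) (α : P.Fib A) (γ : P.Fib (A ⊗ A)),
      P.reindex (fst A A) α ⊓ delta A ≤ γ ↔ α ≤ P.reindex (lift (𝟙 A) (𝟙 A)) γ
  delta_adj₂ : ∀ (X A : C) (α : P.Fib (X ⊗ A)) (γ : P.Fib ((X ⊗ A) ⊗ A)),
      P.reindex (fst (X ⊗ A) A) α ⊓
        P.reindex (lift (fst (X ⊗ A) A ≫ snd X A) (snd (X ⊗ A) A)) (delta A) ≤ γ ↔
      α ≤ P.reindex (lift (𝟙 (X ⊗ A)) (snd X A)) γ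

namespace PureExistentialDoctrine

variable {C : Type u} [Category.{v} C] [CartesianMonoidalCategory C]

/-- An element `α ∈ P(A)` is a **pure existential splitting** if whenever `α = ∃_{π_A}(β)`
for a projection `π_A : A ⊗ B ⟶ A`, there is `h : A ⟶ B` with `α = P_{⟨id_A, h⟩}(β)`. -/
def IsSplitting (P : PureExistentialDoctrine.{w} C) {A : C} (α : P.Fib A) : Prop :=
  ∀ (B : C) (β : P.Fib (A ⊗ B)), α = P.ex A B β →
    ∃ h : A ⟶ B, α = P.reindex (lift (𝟙 A) h) β

/-- An element `α ∈ P(A)` is **pure existential free** if every reindexing of it is a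
pure existential splitting. -/
def IsFree (P : PureExistentialDoctrine.{w} C) {A : C} (α : P.Fib A) : Prop :=
  ∀ {B : C} (f : B ⟶ A), P.IsSplitting (P.reindex f α)

/-- The **Rule of Choice** for a pure existential doctrine. -/
def RuleOfChoice (P : PureExistentialDoctrine.{w} C) : Prop :=
  ∀ (A B : C) (β : P.Fib (A ⊗ B)), (⊤ : P.Fib A) ≤ P.ex A B β →
    ∃ h : A ⟶ B, (⊤ : P.Fib A) ≤ P.reindex (lift (𝟙 A) h) β

/-- `P` has **enough pure existential free elements**: every element is covered by a
pure existential free one. -/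
def HasEnoughFree (P : PureExistentialDoctrine.{w} C) : Prop :=
  ∀ (A : C) (α : P.Fib A), ∃ (B : C) (β : P.Fib (A ⊗ B)), P.IsFree β ∧ α = P.ex A B β

/-- `P` is **equipped with Hilbert's ε-operators**. -/
def HasHilbertEps (P : PureExistentialDoctrine.{w} C) : Prop :=
  ∀ (A B : C) (α : P.Fib (A ⊗ B)), ∃ e : A ⟶ B,
    P.ex A B α = P.reindex (lift (𝟙 A) e) α

end PureExistentialDoctrine

/-- Let `P` be a pure existential doctrine and `α ∈ P(A)`.
Then `α` is a pure existential splitting if and only if for every product projection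
`π_A : A × B ⟶ A` and every `β ∈ P(A × B)`, whenever `α ≤ ∃_{π_A}(β)` there is an arrow
`h : A ⟶ B` with `α ≤ P_{⟨id_A, h⟩}(β)`. -/
theorem splitting_iff_existence_property {C : Type u} [Category.{v} C]
    [CartesianMonoidalCategory C] (P : PureExistentialDoctrine.{w} C) {A : C} (α : P.Fib A) :
    P.IsSplitting α ↔
      ∀ (B : C) (β : P.Fib (A ⊗ B)), α ≤ P.ex A B β →
        ∃ h : A ⟶ B, α ≤ P.reindex (lift (𝟙 A) h) β := by
  constructor
  · intro hs B β hle
    have key : α = P.ex A B (P.reindex (fst A B) α ⊓ β) := by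
      rw [P.ex_frob, inf_eq_left.mpr hle]
    obtain ⟨h, hh⟩ := hs B _ key
    refine ⟨h, ?_⟩
    rw [hh, P.reindex_inf]
    exact inf_le_right
  · intro hex B β heq
    obtain ⟨h, hh⟩ := hex B β heq.le
    refine ⟨h, le_antisymm hh ?_⟩
    have hβ : β ≤ P.reindex (fst A B) α := (P.ex_adj A B β α).mp heq.ge
    calc P.reindex (lift (𝟙 A) h) β ≤ P.reindex (lift (𝟙 A) h) (P.reindex (fst A B) α) :=
          P.reindex_mono _ hβ
      _ = P.reindex (lift (𝟙 A) h ≫ fst A B) α := (P.reindex_comp _ _ _).symm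
      _ = α := by rw [lift_fst, P.reindex_id]
end

section
/- Let P : Cᵒᵖ → InfSL be a pure existential doctrine and let P' be a full subdoctrine of P. If every element of P is covered by an element of P', then every pure existential splitting of P relative to P' is a pure existential splitting of P. -/
open CategoryTheory MonoidalCategory CartesianMonoidalCategory Limits

universe w v u

/-- A **full subdoctrine** of a primary doctrine: a choice of sub-inf-semilattices of the
fibres, closed under reindexing. -/
structure Subdoctrine {C : Type u} [Category.{v} C] [CartesianMonoidalCategory C]
    (P : PrimaryDoctrine.{w} C) where
  mem : ∀ A : C, Set (P.Fib A)
  top_mem : ∀ A : C, (⊤ : P.Fib A) ∈ mem A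
  inf_mem : ∀ (A : C) {a b : P.Fib A}, a ∈ mem A → b ∈ mem A → a ⊓ b ∈ mem A
  reindex_mem : ∀ {A B : C} (f : A ⟶ B) {b : P.Fib B}, b ∈ mem B → P.reindex f b ∈ mem A

namespace Subdoctrine

variable {C : Type u} [Category.{v} C] [CartesianMonoidalCategory C]

/-- The primary doctrine determined by a full subdoctrine. -/
def toPrimary {P : PrimaryDoctrine.{w} C} (S : Subdoctrine P) : PrimaryDoctrine.{w} C where
  Fib A := {a : P.Fib A // a ∈ S.mem A}
  instSemilatticeInf A :=
    { (inferInstance : PartialOrder {a : P.Fib A // a ∈ S.mem A}) with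
      inf := fun a b => ⟨a.1 ⊓ b.1, S.inf_mem A a.2 b.2⟩
      inf_le_left := fun _ _ => (inf_le_left : _ ⊓ _ ≤ _)
      inf_le_right := fun _ _ => (inf_le_right : _ ⊓ _ ≤ _)
      le_inf := fun _ _ _ h h' => (le_inf h h' : _ ≤ _ ⊓ _) }
  instOrderTop A :=
    { top := ⟨⊤, S.top_mem A⟩
      le_top := fun a => (le_top : a.1 ≤ ⊤) }
  reindex f b := ⟨P.reindex f b.1, S.reindex_mem f b.2⟩
  reindex_id A a := Subtype.ext (P.reindex_id A a.1)
  reindex_comp f g d := Subtype.ext (P.reindex_comp f g d.1)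
  reindex_inf f x y := Subtype.ext (P.reindex_inf f x.1 y.1)
  reindex_top f := Subtype.ext (P.reindex_top f)

variable {P : PureExistentialDoctrine.{w} C}

/-- `α` is a **pure existential splitting of `P` relative to the subdoctrine `S`**:
the splitting property where the covering element is required to lie in `S`. -/
def IsRelSplitting (S : Subdoctrine P.toPrimaryDoctrine) {A : C} (α : P.Fib A) : Prop :=
  ∀ (B : C) (β : P.Fib (A ⊗ B)), β ∈ S.mem (A ⊗ B) → α = P.ex A B β →
    ∃ h : A ⟶ B, α = P.reindex (lift (𝟙 A) h) β

/-- Every element of `P` is covered by an element of the subdoctrine `S`. -/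
def CoversAll (S : Subdoctrine P.toPrimaryDoctrine) : Prop :=
  ∀ (A : C) (α : P.Fib A), ∃ (B : C) (β : P.Fib (A ⊗ B)),
    β ∈ S.mem (A ⊗ B) ∧ α = P.ex A B β

/-- `S` is a **pure existential cover** of `P`. -/
def IsCover (S : Subdoctrine P.toPrimaryDoctrine) : Prop :=
  (∀ (A : C) (α : P.Fib A), α ∈ S.mem A → P.IsSplitting α) ∧ S.CoversAll

/-- `S` is a **pure existential relative cover** of `P`. -/
def IsRelCover (S : Subdoctrine P.toPrimaryDoctrine) : Prop :=
  (∀ (A : C) (α : P.Fib A), α ∈ S.mem A → S.IsRelSplitting α) ∧ S.CoversAll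

end Subdoctrine

/-- Let `P` be a pure existential doctrine and `P'` a full subdoctrine of
`P`. If every element of `P` is covered by an element of `P'`, then every pure existential
splitting of `P` relative to `P'` is a pure existential splitting of `P`. -/
theorem relSplitting_isSplitting_of_coversAll {C : Type u} [Category.{v} C]
    [CartesianMonoidalCategory C] {P : PureExistentialDoctrine.{w} C}
    (S : Subdoctrine P.toPrimaryDoctrine) (hcov : S.CoversAll)
    {A : C} (α : P.Fib A) (hα : α ∈ S.mem A) (hrel : S.IsRelSplitting α) :
    P.IsSplitting α := by
  intro B β hβ
  obtain ⟨B', γ, hγS, hγ⟩ := hcov (A ⊗ B) β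
  set a : A ⊗ (B ⊗ B') ⟶ (A ⊗ B) ⊗ B' := (α_ A B B').inv with ha
  set γ' : P.Fib (A ⊗ (B ⊗ B')) := P.reindex a γ with hγ'def
  have hγ'S : γ' ∈ S.mem _ := S.reindex_mem a hγS
  have unit : ∀ {X Y : C} (δ : P.Fib (X ⊗ Y)), δ ≤ P.reindex (fst X Y) (P.ex X Y δ) :=
    fun δ => (P.ex_adj _ _ δ _).mp le_rfl
  have hβα : β ≤ P.reindex (fst A B) α := by rw [hβ]; exact unit β
  have hγβ : γ ≤ P.reindex (fst (A ⊗ B) B') β := by rw [hγ]; exact unit γ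
  have hcomp : (α_ A B B').hom ≫ fst A (B ⊗ B') = fst (A ⊗ B) B' ≫ fst A B := by
    simp
  have hcomp' : a ≫ fst (A ⊗ B) B' ≫ fst A B = fst A (B ⊗ B') := by
    rw [ha, ← hcomp, Iso.inv_hom_id_assoc]
  have key : α = P.ex A (B ⊗ B') γ' := by
    apply le_antisymm
    · have h1 : γ' ≤ P.reindex (fst A (B ⊗ B')) (P.ex A (B ⊗ B') γ') := unit γ'
      have h2 : γ ≤ P.reindex (fst (A ⊗ B) B' ≫ fst A B) (P.ex A (B ⊗ B') γ') := by
        have h3 := P.reindex_mono ((α_ A B B').hom) h1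
        rw [hγ'def, ← P.reindex_comp, ha, Iso.hom_inv_id, P.reindex_id,
          ← P.reindex_comp, hcomp, P.reindex_comp] at h3
        rw [P.reindex_comp]
        exact h3
      rw [P.reindex_comp] at h2
      have h4 : P.ex (A ⊗ B) B' γ ≤ P.reindex (fst A B) (P.ex A (B ⊗ B') γ') :=
        (P.ex_adj _ _ _ _).mpr h2
      rw [← hγ] at h4
      have h5 : P.ex A B β ≤ P.ex A (B ⊗ B') γ' := (P.ex_adj _ _ _ _).mpr h4
      rw [← hβ] at h5
      exact h5
    · refine (P.ex_adj _ _ _ _).mpr ?_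
      have h6 : γ ≤ P.reindex (fst (A ⊗ B) B' ≫ fst A B) α := by
        rw [P.reindex_comp]
        exact le_trans hγβ (P.reindex_mono _ hβα)
      calc γ' ≤ P.reindex a (P.reindex (fst (A ⊗ B) B' ≫ fst A B) α) :=
            P.reindex_mono a h6
        _ = P.reindex (fst A (B ⊗ B')) α := by
            rw [← P.reindex_comp, hcomp']
  obtain ⟨k, hk⟩ := hrel (B ⊗ B') γ' hγ'S key
  refine ⟨k ≫ fst B B', ?_⟩
  have hlift : lift (𝟙 A) k ≫ a ≫ fst (A ⊗ B) B' = lift (𝟙 A) (k ≫ fst B B') := by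
    apply CartesianMonoidalCategory.hom_ext <;> simp [ha]
  apply le_antisymm
  · have h7 : α ≤ P.reindex (lift (𝟙 A) k ≫ a) (P.reindex (fst (A ⊗ B) B') β) := by
      rw [hk, hγ'def, ← P.reindex_comp]
      exact P.reindex_mono _ hγβ
    rw [← P.reindex_comp, Category.assoc, hlift] at h7
    exact h7
  · have h8 := P.reindex_mono (lift (𝟙 A) (k ≫ fst B B')) hβα
    rw [← P.reindex_comp, lift_fst, P.reindex_id] at h8
    exact h8
end

section
/- Let P : Cᵒᵖ → InfSL be a pure existential doctrine and let P' be a full subdoctrine of P. Then P' is a pure existential cover of P if and only if P' is a pure existential relative cover of P. -/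
open CategoryTheory MonoidalCategory CartesianMonoidalCategory Limits

universe w v u

/-- Let `P` be a pure existential doctrine and `P'` a full subdoctrine of
`P`. Then `P'` is a pure existential cover of `P` if and only if `P'` is a pure existential
relative cover of `P`. -/
theorem isCover_iff_isRelCover {C : Type u} [Category.{v} C] [CartesianMonoidalCategory C]
    {P : PureExistentialDoctrine.{w} C} (S : Subdoctrine P.toPrimaryDoctrine) :
    S.IsCover ↔ S.IsRelCover := by
  constructor
  · rintro ⟨hsplit, hcov⟩
    exact ⟨fun A α hα B β _ hβ => hsplit A α hα B β hβ, hcov⟩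
  · rintro ⟨hrel, hcov⟩
    refine ⟨fun A α hα => ?_, hcov⟩
    intro B β hβeq
    obtain ⟨B', γ, hγmem, hγeq⟩ := hcov (A ⊗ B) β
    set f : A ⊗ (B ⊗ B') ⟶ (A ⊗ B) ⊗ B' :=
      lift (lift (fst _ _) (snd _ _ ≫ fst _ _)) (snd _ _ ≫ snd _ _) with hf
    set f' : (A ⊗ B) ⊗ B' ⟶ A ⊗ (B ⊗ B') :=
      lift (fst _ _ ≫ fst _ _) (lift (fst _ _ ≫ snd _ _) (snd _ _)) with hf'
    have hff' : f' ≫ f = 𝟙 _ := by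
      apply CartesianMonoidalCategory.hom_ext
      · apply CartesianMonoidalCategory.hom_ext <;> simp [hf, hf']
      · simp [hf, hf']
    have hfpi : f ≫ fst (A ⊗ B) B' ≫ fst A B = fst A (B ⊗ B') := by
      simp [hf]
    have hf'pi : f' ≫ fst A (B ⊗ B') = fst (A ⊗ B) B' ≫ fst A B := by
      simp [hf']
    have hβγ : γ ≤ P.reindex (fst (A ⊗ B) B') β :=
      (P.ex_adj _ _ _ _).mp hγeq.ge
    have hαβ : β ≤ P.reindex (fst A B) α :=
      (P.ex_adj _ _ _ _).mp hβeq.ge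
    -- α is the existential of the transported γ
    have hex : α = P.ex A (B ⊗ B') (P.reindex f γ) := by
      apply le_antisymm
      · -- α = ex β = ex (ex γ) ≤ ex (reindex f γ)
        rw [hβeq, hγeq]
        apply (P.ex_adj _ _ _ _).mpr
        apply (P.ex_adj _ _ _ _).mpr
        have hunit : P.reindex f γ ≤
            P.reindex (fst A (B ⊗ B')) (P.ex A (B ⊗ B') (P.reindex f γ)) :=
          (P.ex_adj _ _ _ _).mp le_rfl
        calc γ = P.reindex (f' ≫ f) γ := by
                rw [hff', P.reindex_id]
          _ = P.reindex f' (P.reindex f γ) := P.reindex_comp _ _ _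
          _ ≤ P.reindex f' (P.reindex (fst A (B ⊗ B'))
                (P.ex A (B ⊗ B') (P.reindex f γ))) :=
              P.toPrimaryDoctrine.reindex_mono _ hunit
          _ = P.reindex (f' ≫ fst A (B ⊗ B'))
                (P.ex A (B ⊗ B') (P.reindex f γ)) := (P.reindex_comp _ _ _).symm
          _ = P.reindex (fst (A ⊗ B) B' ≫ fst A B)
                (P.ex A (B ⊗ B') (P.reindex f γ)) := by rw [hf'pi]
          _ = P.reindex (fst (A ⊗ B) B') (P.reindex (fst A B)
                (P.ex A (B ⊗ B') (P.reindex f γ))) := P.reindex_comp _ _ _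
      · apply (P.ex_adj _ _ _ _).mpr
        calc P.reindex f γ
            ≤ P.reindex f (P.reindex (fst (A ⊗ B) B') (P.reindex (fst A B) α)) := by
              apply P.toPrimaryDoctrine.reindex_mono
              exact le_trans hβγ (P.toPrimaryDoctrine.reindex_mono _ hαβ)
          _ = P.reindex (f ≫ fst (A ⊗ B) B' ≫ fst A B) α := by
              rw [P.reindex_comp, P.reindex_comp]
          _ = P.reindex (fst A (B ⊗ B')) α := by rw [hfpi]
    obtain ⟨h, hh⟩ := hrel A α hα (B ⊗ B') (P.reindex f γ)
      (S.reindex_mem f hγmem) hex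
    refine ⟨h ≫ fst B B', le_antisymm ?_ ?_⟩
    · have hcomp : lift (𝟙 A) h ≫ f ≫ fst (A ⊗ B) B' = lift (𝟙 A) (h ≫ fst B B') := by
        apply CartesianMonoidalCategory.hom_ext <;> simp [hf]
      calc α = P.reindex (lift (𝟙 A) h) (P.reindex f γ) := hh
        _ = P.reindex (lift (𝟙 A) h ≫ f) γ := (P.reindex_comp _ _ _).symm
        _ ≤ P.reindex (lift (𝟙 A) h ≫ f) (P.reindex (fst (A ⊗ B) B') β) :=
            P.toPrimaryDoctrine.reindex_mono _ hβγ
        _ = P.reindex ((lift (𝟙 A) h ≫ f) ≫ fst (A ⊗ B) B') β :=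
            (P.reindex_comp _ _ _).symm
        _ = P.reindex (lift (𝟙 A) (h ≫ fst B B')) β := by rw [Category.assoc, hcomp]
    · calc P.reindex (lift (𝟙 A) (h ≫ fst B B')) β
          ≤ P.reindex (lift (𝟙 A) (h ≫ fst B B')) (P.reindex (fst A B) α) :=
            P.toPrimaryDoctrine.reindex_mono _ hαβ
        _ = P.reindex (lift (𝟙 A) (h ≫ fst B B') ≫ fst A B) α :=
            (P.reindex_comp _ _ _).symm
        _ = α := by rw [lift_fst, P.reindex_id]
end

section
/- Let P : Cᵒᵖ → InfSL be a pure existential doctrine. The following conditions are equivalent: (1) P is isomorphic to the pure existential completion (P')^∃ of a primary doctrine P'; (2) P satisfies the Rule of Choice, the binary meet of any two pure existential free objects of P(A) is pure existential free, and P has enough pure existential free elements; (3) P has a (unique) pure existential cover; (4) P has a (unique) pure existential relative cover. -/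
open CategoryTheory MonoidalCategory CartesianMonoidalCategory SemiCartesianMonoidalCategory Limits

universe w v u

section ExistentialCompletion

variable {C : Type u} [Category.{v} C] [CartesianMonoidalCategory C]

/-- The carrier of the fibre over `A` of the **pure existential completion** of a primary
doctrine `P`: pairs `(B, α ∈ P(A ⊗ B))`. -/
def ExtCarrier (P : PrimaryDoctrine.{w} C) (A : C) : Type _ :=
  Σ B : C, P.Fib (A ⊗ B)

/-- The preorder on the fibres of the pure existential completion:
`(B, α) ≤ (C, γ)` iff there is `w : A ⊗ B ⟶ C` with `α ≤ P_{⟨π_A, w⟩}(γ)`. -/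
def extLe {P : PrimaryDoctrine.{w} C} {A : C} (x y : ExtCarrier P A) : Prop :=
  ∃ w : A ⊗ x.1 ⟶ y.1, x.2 ≤ P.reindex (lift (fst A x.1) w) y.2

/-- The equivalence relation induced by the preorder `extLe`. -/
def extEquiv {P : PrimaryDoctrine.{w} C} {A : C} (x y : ExtCarrier P A) : Prop :=
  extLe x y ∧ extLe y x

/-- Reindexing in the pure existential completion:
along `f : A' ⟶ A` it sends `(D, γ)` to `(D, P_{⟨f ∘ π_{A'}, π_D⟩}(γ))`. -/
def extReindex {P : PrimaryDoctrine.{w} C} {A' A : C} (f : A' ⟶ A) (x : ExtCarrier P A) :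
    ExtCarrier P A' :=
  ⟨x.1, P.reindex (lift (fst A' x.1 ≫ f) (snd A' x.1)) x.2⟩

/-- Binary meets in the fibres of the pure existential completion. -/
def extInf {P : PrimaryDoctrine.{w} C} {A : C} (x y : ExtCarrier P A) : ExtCarrier P A :=
  ⟨x.1 ⊗ y.1,
    P.reindex (lift (fst A (x.1 ⊗ y.1)) (snd A (x.1 ⊗ y.1) ≫ fst x.1 y.1)) x.2 ⊓
    P.reindex (lift (fst A (x.1 ⊗ y.1)) (snd A (x.1 ⊗ y.1) ≫ snd x.1 y.1)) y.2⟩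

/-- The top element of the fibres of the pure existential completion. -/
def extTop (P : PrimaryDoctrine.{w} C) (A : C) : ExtCarrier P A :=
  ⟨𝟙_ C, (⊤ : P.Fib (A ⊗ 𝟙_ C))⟩

/-- The left adjoints along projections in the pure existential completion. -/
def extEx {P : PrimaryDoctrine.{w} C} (A B : C) (x : ExtCarrier P (A ⊗ B)) :
    ExtCarrier P A :=
  ⟨B ⊗ x.1, P.reindex (α_ A B x.1).inv x.2⟩

/-- `P` (a pure existential doctrine) **is the pure existential completion of the primary
doctrine `P'`**, i.e. `P` is isomorphic, as a doctrine over `C`, to `(P')^∃`: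
there is a natural family of order-isomorphisms between the fibres of `P` and those of the
completion (the latter being the antisymmetrization of `ExtCarrier P'`). -/
structure IsExtCompletionOf (P : PureExistentialDoctrine.{w} C) (P' : PrimaryDoctrine.{w} C) where
  toFun : ∀ A : C, P.Fib A → ExtCarrier P' A
  invFun : ∀ A : C, ExtCarrier P' A → P.Fib A
  toFun_mono : ∀ (A : C) {a b : P.Fib A}, a ≤ b → extLe (toFun A a) (toFun A b)
  invFun_mono : ∀ (A : C) {x y : ExtCarrier P' A}, extLe x y → invFun A x ≤ invFun A y
  left_inv : ∀ (A : C) (a : P.Fib A), invFun A (toFun A a) = a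
  right_inv : ∀ (A : C) (x : ExtCarrier P' A), extEquiv (toFun A (invFun A x)) x
  natural : ∀ {A' A : C} (f : A' ⟶ A) (a : P.Fib A),
      extEquiv (toFun A' (P.reindex f a)) (extReindex f (toFun A a))

end ExistentialCompletion
section AuxBase

variable {C : Type u} [Category.{v} C] [CartesianMonoidalCategory C]

namespace PureExistentialDoctrine

variable (P : PureExistentialDoctrine.{w} C)

theorem ex_unit (A B : C) (β : P.Fib (A ⊗ B)) :
    β ≤ P.reindex (fst A B) (P.ex A B β) :=
  (P.ex_adj A B β _).mp le_rfl

theorem ex_mono {A B : C} {β β' : P.Fib (A ⊗ B)} (h : β ≤ β') :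
    P.ex A B β ≤ P.ex A B β' :=
  (P.ex_adj ..).mpr (h.trans (P.ex_unit A B β'))

/-- Any "section" reindexing of `β` lies below `∃ β`. -/
theorem reindex_section_le_ex (A B : C) (β : P.Fib (A ⊗ B)) (h : A ⟶ B) :
    P.reindex (lift (𝟙 A) h) β ≤ P.ex A B β := by
  have h1 := P.toPrimaryDoctrine.reindex_mono (lift (𝟙 A) h) (P.ex_unit A B β)
  rw [← P.reindex_comp, lift_fst, P.reindex_id] at h1
  exact h1

theorem ex_le_of_le_reindex {A B D : C} {β : P.Fib (A ⊗ B)} {δ : P.Fib (A ⊗ D)}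
    (w : A ⊗ B ⟶ D) (h : β ≤ P.reindex (lift (fst A B) w) δ) :
    P.ex A B β ≤ P.ex A D δ := by
  rw [P.ex_adj]
  refine h.trans ?_
  have h1 := P.toPrimaryDoctrine.reindex_mono (lift (fst A B) w) (P.ex_unit A D δ)
  rw [← P.reindex_comp, lift_fst] at h1
  exact h1

/-- Composition of existential quantifiers along a pair of projections. -/
theorem ex_ex (A B E : C) (γ : P.Fib ((A ⊗ B) ⊗ E)) :
    P.ex A B (P.ex (A ⊗ B) E γ) = P.ex A (B ⊗ E) (P.reindex (α_ A B E).inv γ) := by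
  apply le_antisymm
  · rw [P.ex_adj, P.ex_adj]
    have h1 := P.ex_unit A (B ⊗ E) (P.reindex (α_ A B E).inv γ)
    have h2 := P.toPrimaryDoctrine.reindex_mono (α_ A B E).hom h1
    rw [← P.reindex_comp, Iso.hom_inv_id, P.reindex_id, ← P.reindex_comp,
      associator_hom_fst, P.reindex_comp] at h2
    exact h2
  · rw [P.ex_adj]
    have h1 := (P.ex_unit (A ⊗ B) E γ).trans
      (P.toPrimaryDoctrine.reindex_mono _ (P.ex_unit A B (P.ex (A ⊗ B) E γ)))
    have h2 := P.toPrimaryDoctrine.reindex_mono (α_ A B E).inv h1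
    rw [← P.reindex_comp, ← P.reindex_comp, Category.assoc, associator_inv_fst_fst] at h2
    exact h2

/-- Key lemma: if `β` is a splitting and `∃ β ≤ ∃ δ`, then `β` is below a reindexing of
`δ` along a map over `A`. -/
theorem split_le_ex {A B D : C} {β : P.Fib (A ⊗ B)} (hs : P.IsSplitting β)
    {δ : P.Fib (A ⊗ D)} (h : P.ex A B β ≤ P.ex A D δ) :
    ∃ w : A ⊗ B ⟶ D, β ≤ P.reindex (lift (fst A B) w) δ := by
  have h1 : β ≤ P.ex (A ⊗ B) D (P.reindex (fst A B ▷ D) δ) := by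
    rw [P.ex_bcc]
    exact (P.ex_unit A B β).trans (P.toPrimaryDoctrine.reindex_mono _ h)
  have h2 : β = P.ex (A ⊗ B) D
      (P.reindex (fst (A ⊗ B) D) β ⊓ P.reindex (fst A B ▷ D) δ) := by
    rw [P.ex_frob]
    exact (inf_eq_left.mpr h1).symm
  obtain ⟨k, hk⟩ := hs D _ h2
  refine ⟨k, ?_⟩
  rw [P.reindex_inf] at hk
  have e1 : P.reindex (lift (𝟙 (A ⊗ B)) k) (P.reindex (fst A B ▷ D) δ)
      = P.reindex (lift (fst A B) k) δ := by
    rw [← P.reindex_comp]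
    congr 1
    apply CartesianMonoidalCategory.hom_ext <;> simp
  rw [e1] at hk
  rw [hk]
  exact inf_le_right

theorem isFree_reindex {A B : C} {α : P.Fib A} (hα : P.IsFree α) (f : B ⟶ A) :
    P.IsFree (P.reindex f α) := by
  intro D g
  have := hα (g ≫ f)
  rwa [P.reindex_comp] at this

theorem isFree_isSplitting {A : C} {α : P.Fib A} (hα : P.IsFree α) : P.IsSplitting α := by
  have := hα (𝟙 A)
  rwa [P.reindex_id] at this

theorem top_isFree (hRoC : P.RuleOfChoice) (A : C) : P.IsFree (⊤ : P.Fib A) := by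
  intro B f
  rw [P.reindex_top]
  intro D β hβ
  obtain ⟨h, hh⟩ := hRoC B D β (le_of_eq hβ)
  exact ⟨h, le_antisymm hh le_top⟩

end PureExistentialDoctrine

namespace Subdoctrine

theorem ext' {P : PrimaryDoctrine.{w} C} {S T : Subdoctrine P} (h : S.mem = T.mem) :
    S = T := by
  cases S; cases T; cases h; rfl

variable {P : PureExistentialDoctrine.{w} C}

/-- In a pure existential cover every member is existential free. -/
theorem IsCover.free_of_mem {S : Subdoctrine P.toPrimaryDoctrine} (hS : S.IsCover)
    {A : C} {α : P.Fib A} (hα : α ∈ S.mem A) : P.IsFree α := by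
  intro B f
  exact hS.1 B _ (S.reindex_mem f hα)

/-- In a pure existential cover, every free element is a member. -/
theorem IsCover.mem_of_free {S : Subdoctrine P.toPrimaryDoctrine} (hS : S.IsCover)
    {A : C} {α : P.Fib A} (hα : P.IsFree α) : α ∈ S.mem A := by
  obtain ⟨B, β, hβmem, hβ⟩ := hS.2 A α
  obtain ⟨h, hh⟩ := P.isFree_isSplitting hα B β hβ
  rw [hh]
  exact S.reindex_mem _ hβmem

/-- Pure existential covers are unique. -/
theorem IsCover.unique {S T : Subdoctrine P.toPrimaryDoctrine} (hS : S.IsCover)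
    (hT : T.IsCover) : S = T := by
  apply ext'
  funext A
  apply Set.eq_of_subset_of_subset <;> intro α hα
  · exact hT.mem_of_free (hS.free_of_mem hα)
  · exact hS.mem_of_free (hT.free_of_mem hα)

theorem IsCover.isRelCover {S : Subdoctrine P.toPrimaryDoctrine} (hS : S.IsCover) :
    S.IsRelCover :=
  ⟨fun A α hα B β _ hβ => hS.1 A α hα B β hβ, hS.2⟩

/-- Every member of a pure existential relative cover is a genuine splitting. -/
theorem IsRelCover.isSplitting {S : Subdoctrine P.toPrimaryDoctrine} (hS : S.IsRelCover)
    {A : C} {α : P.Fib A} (hα : α ∈ S.mem A) : P.IsSplitting α := by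
  intro B β hβ
  obtain ⟨E, γ, hγmem, hγ⟩ := hS.2 (A ⊗ B) β
  have key : α = P.ex A (B ⊗ E) (P.reindex (α_ A B E).inv γ) := by
    rw [← P.ex_ex, ← hγ, ← hβ]
  obtain ⟨h1, hh1⟩ := hS.1 A α hα (B ⊗ E) _ (S.reindex_mem _ hγmem) key
  refine ⟨h1 ≫ fst B E, le_antisymm ?_ ?_⟩
  · rw [hh1, ← P.reindex_comp]
    have h2 := P.toPrimaryDoctrine.reindex_mono (lift (𝟙 A) h1 ≫ (α_ A B E).inv)
      (P.ex_unit (A ⊗ B) E γ)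
    rw [← P.reindex_comp, ← hγ] at h2
    refine h2.trans (le_of_eq ?_)
    congr 1
    apply CartesianMonoidalCategory.hom_ext <;> simp
  · rw [hβ]
    exact P.reindex_section_le_ex A B β (h1 ≫ fst B E)

theorem IsRelCover.isCover {S : Subdoctrine P.toPrimaryDoctrine} (hS : S.IsRelCover) :
    S.IsCover :=
  ⟨fun A α hα => hS.isSplitting hα, hS.2⟩

end Subdoctrine

end AuxBase
section AuxExt

variable {C : Type u} [Category.{v} C] [CartesianMonoidalCategory C] {Q : PrimaryDoctrine.{w} C}

theorem extLe_refl {A : C} (x : ExtCarrier Q A) : extLe x x := by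
  refine ⟨snd A x.1, ?_⟩
  rw [lift_fst_snd, Q.reindex_id]

theorem extLe_trans {A : C} {x y z : ExtCarrier Q A} (h1 : extLe x y) (h2 : extLe y z) :
    extLe x z := by
  obtain ⟨w1, hw1⟩ := h1
  obtain ⟨w2, hw2⟩ := h2
  refine ⟨lift (fst A x.1) w1 ≫ w2, ?_⟩
  refine hw1.trans ?_
  have h3 := Q.reindex_mono (lift (fst A x.1) w1) hw2
  rw [← Q.reindex_comp, comp_lift, lift_fst] at h3
  exact h3

theorem extEquiv_refl {A : C} (x : ExtCarrier Q A) : extEquiv x x :=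
  ⟨extLe_refl x, extLe_refl x⟩

theorem extEquiv_symm {A : C} {x y : ExtCarrier Q A} (h : extEquiv x y) : extEquiv y x :=
  ⟨h.2, h.1⟩

theorem extEquiv_trans {A : C} {x y z : ExtCarrier Q A} (h1 : extEquiv x y)
    (h2 : extEquiv y z) : extEquiv x z :=
  ⟨extLe_trans h1.1 h2.1, extLe_trans h2.2 h1.2⟩

theorem extLe_top {A : C} (x : ExtCarrier Q A) : extLe x (extTop Q A) := by
  refine ⟨toUnit _, ?_⟩
  show x.2 ≤ Q.reindex _ (⊤ : Q.Fib (A ⊗ 𝟙_ C))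
  exact le_of_le_of_eq le_top (Q.reindex_top _).symm

theorem extInf_le_left {A : C} (x y : ExtCarrier Q A) : extLe (extInf x y) x :=
  ⟨snd _ _ ≫ fst x.1 y.1, inf_le_left⟩

theorem extInf_le_right {A : C} (x y : ExtCarrier Q A) : extLe (extInf x y) y :=
  ⟨snd _ _ ≫ snd x.1 y.1, inf_le_right⟩

theorem le_extInf {A : C} {z x y : ExtCarrier Q A} (h1 : extLe z x) (h2 : extLe z y) :
    extLe z (extInf x y) := by
  obtain ⟨w1, hw1⟩ := h1
  obtain ⟨w2, hw2⟩ := h2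
  refine ⟨lift w1 w2, ?_⟩
  show z.2 ≤ Q.reindex (lift (fst A z.1) (lift w1 w2)) (_ ⊓ _)
  rw [Q.reindex_inf, ← Q.reindex_comp, ← Q.reindex_comp]
  have e1 : lift (fst A z.1) (lift w1 w2) ≫
      lift (fst A (x.1 ⊗ y.1)) (snd A (x.1 ⊗ y.1) ≫ fst x.1 y.1) = lift (fst A z.1) w1 := by
    apply CartesianMonoidalCategory.hom_ext <;> simp
  have e2 : lift (fst A z.1) (lift w1 w2) ≫
      lift (fst A (x.1 ⊗ y.1)) (snd A (x.1 ⊗ y.1) ≫ snd x.1 y.1) = lift (fst A z.1) w2 := by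
    apply CartesianMonoidalCategory.hom_ext <;> simp
  rw [e1, e2]
  exact le_inf hw1 hw2

theorem extReindex_mono {A' A : C} (f : A' ⟶ A) {x y : ExtCarrier Q A} (h : extLe x y) :
    extLe (extReindex f x) (extReindex f y) := by
  obtain ⟨B, ξ⟩ := x
  obtain ⟨D, η⟩ := y
  obtain ⟨w, hw⟩ := h
  simp only [extReindex] at hw ⊢
  refine ⟨lift (fst A' B ≫ f) (snd A' B) ≫ w, ?_⟩
  show Q.reindex (lift (fst A' B ≫ f) (snd A' B)) ξ ≤
    Q.reindex (lift (fst A' B) (lift (fst A' B ≫ f) (snd A' B) ≫ w))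
      (Q.reindex (lift (fst A' D ≫ f) (snd A' D)) η)
  refine (Q.reindex_mono (lift (fst A' B ≫ f) (snd A' B)) hw).trans (le_of_eq ?_)
  rw [← Q.reindex_comp, ← Q.reindex_comp]
  congr 1
  apply CartesianMonoidalCategory.hom_ext <;> simp

theorem extEx_le_iff {A B : C} (x : ExtCarrier Q (A ⊗ B)) (y : ExtCarrier Q A) :
    extLe (extEx A B x) y ↔ extLe x (extReindex (fst A B) y) := by
  obtain ⟨D, ξ⟩ := x
  obtain ⟨E, η⟩ := y
  constructor
  · rintro ⟨w, hw⟩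
    simp only [extEx] at hw w
    refine ⟨(α_ A B D).hom ≫ w, ?_⟩
    show ξ ≤ Q.reindex (lift (fst (A ⊗ B) D) ((α_ A B D).hom ≫ w))
      (Q.reindex (lift (fst (A ⊗ B) E ≫ fst A B) (snd (A ⊗ B) E)) η)
    have h2 := Q.reindex_mono (α_ A B D).hom hw
    rw [← Q.reindex_comp, Iso.hom_inv_id, Q.reindex_id, ← Q.reindex_comp] at h2
    refine h2.trans (le_of_eq ?_)
    rw [← Q.reindex_comp]
    congr 1
    apply CartesianMonoidalCategory.hom_ext <;> simp
  · rintro ⟨w, hw⟩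
    simp only [extReindex] at hw w
    refine ⟨(α_ A B D).inv ≫ w, ?_⟩
    show Q.reindex (α_ A B D).inv ξ ≤
      Q.reindex (lift (fst A (B ⊗ D)) ((α_ A B D).inv ≫ w)) η
    have h2 := Q.reindex_mono (α_ A B D).inv hw
    rw [← Q.reindex_comp, ← Q.reindex_comp] at h2
    refine h2.trans (le_of_eq ?_)
    congr 1
    apply CartesianMonoidalCategory.hom_ext <;> simp

theorem extEx_mono {A B : C} {x y : ExtCarrier Q (A ⊗ B)} (h : extLe x y) :
    extLe (extEx A B x) (extEx A B y) :=
  (extEx_le_iff _ _).mpr (extLe_trans h ((extEx_le_iff _ _).mp (extLe_refl _)))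

/-- Changing the index object along an isomorphism gives an equivalent element. -/
theorem extEquiv_whisker {A B B'' : C} (e : B ≅ B'') (θ : Q.Fib (A ⊗ B)) :
    extEquiv (⟨B, θ⟩ : ExtCarrier Q A)
      ⟨B'', Q.reindex (lift (fst A B'') (snd A B'' ≫ e.inv)) θ⟩ := by
  constructor
  · refine ⟨snd A B ≫ e.hom, ?_⟩
    show θ ≤ _
    rw [← Q.reindex_comp]
    have e1 : lift (fst A B) (snd A B ≫ e.hom) ≫
        lift (fst A B'') (snd A B'' ≫ e.inv) = 𝟙 _ := by
      apply CartesianMonoidalCategory.hom_ext <;> simp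
    rw [e1, Q.reindex_id]
  · exact ⟨snd A B'' ≫ e.inv, le_rfl⟩

end AuxExt
namespace IsExtCompletionOf

variable {C : Type u} [Category.{v} C] [CartesianMonoidalCategory C]
variable {P : PureExistentialDoctrine.{w} C} {P' : PrimaryDoctrine.{w} C}
variable (Φ : IsExtCompletionOf P P')

theorem le_iff {A : C} (a b : P.Fib A) : a ≤ b ↔ extLe (Φ.toFun A a) (Φ.toFun A b) := by
  constructor
  · exact Φ.toFun_mono A
  · intro h
    have h1 := Φ.invFun_mono A h
    rwa [Φ.left_inv, Φ.left_inv] at h1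

theorem toFun_le_iff {A : C} (a : P.Fib A) (y : ExtCarrier P' A) :
    extLe (Φ.toFun A a) y ↔ a ≤ Φ.invFun A y := by
  constructor
  · intro h
    have h1 := Φ.invFun_mono A h
    rwa [Φ.left_inv] at h1
  · intro h
    exact extLe_trans (Φ.toFun_mono A h) (Φ.right_inv A y).1

theorem le_toFun_iff {A : C} (y : ExtCarrier P' A) (a : P.Fib A) :
    extLe y (Φ.toFun A a) ↔ Φ.invFun A y ≤ a := by
  constructor
  · intro h
    have h1 := Φ.invFun_mono A h
    rwa [Φ.left_inv] at h1
  · intro h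
    exact extLe_trans (Φ.right_inv A y).2 (Φ.toFun_mono A h)

/-- The iso `Φ` carries `P`'s existential quantifier to the one of the completion. -/
theorem toFun_ex {A B : C} (β : P.Fib (A ⊗ B)) :
    extEquiv (Φ.toFun A (P.ex A B β)) (extEx A B (Φ.toFun (A ⊗ B) β)) := by
  constructor
  · rw [Φ.toFun_le_iff, P.ex_adj]
    set Y := extEx A B (Φ.toFun (A ⊗ B) β) with hY
    have u1 : extLe (Φ.toFun (A ⊗ B) β) (extReindex (fst A B) Y) :=
      (extEx_le_iff _ _).mp (extLe_refl _)
    have u2 : extLe (extReindex (fst A B) Y)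
        (Φ.toFun (A ⊗ B) (P.reindex (fst A B) (Φ.invFun A Y))) :=
      extLe_trans (extReindex_mono _ (Φ.right_inv A Y).2)
        (Φ.natural (fst A B) (Φ.invFun A Y)).2
    exact (Φ.le_iff _ _).mpr (extLe_trans u1 u2)
  · rw [extEx_le_iff]
    exact extLe_trans (Φ.toFun_mono (A ⊗ B) (P.ex_unit A B β))
      (Φ.natural (fst A B) (P.ex A B β)).1

end IsExtCompletionOf
namespace PureExistentialDoctrine

variable {C : Type u} [Category.{v} C] [CartesianMonoidalCategory C]
variable (P : PureExistentialDoctrine.{w} C)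

/-- The subdoctrine of pure existential free elements. -/
def freeSub (hRoC : P.RuleOfChoice)
    (hInf : ∀ (A : C) (α β : P.Fib A), P.IsFree α → P.IsFree β → P.IsFree (α ⊓ β)) :
    Subdoctrine P.toPrimaryDoctrine where
  mem A := {a | P.IsFree a}
  top_mem A := P.top_isFree hRoC A
  inf_mem := fun A {a b} ha hb => hInf A a b ha hb
  reindex_mem := fun {A B} f {b} hb => P.isFree_reindex hb f

theorem freeSub_isCover (hRoC : P.RuleOfChoice)
    (hInf : ∀ (A : C) (α β : P.Fib A), P.IsFree α → P.IsFree β → P.IsFree (α ⊓ β))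
    (hE : P.HasEnoughFree) : (P.freeSub hRoC hInf).IsCover := by
  constructor
  · intro A α hα
    exact P.isFree_isSplitting hα
  · intro A α
    obtain ⟨B, β, h1, h2⟩ := hE A α
    exact ⟨B, β, h1, h2⟩

theorem cover_to_two {S : Subdoctrine P.toPrimaryDoctrine} (hS : S.IsCover) :
    P.RuleOfChoice ∧
      (∀ (A : C) (α β : P.Fib A), P.IsFree α → P.IsFree β → P.IsFree (α ⊓ β)) ∧
      P.HasEnoughFree := by
  refine ⟨?_, ?_, ?_⟩
  · intro A B β h
    have h1 : (⊤ : P.Fib A) = P.ex A B β := le_antisymm h le_top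
    obtain ⟨k, hk⟩ := hS.1 A ⊤ (S.top_mem A) B β h1
    exact ⟨k, le_of_eq hk⟩
  · intro A α β hα hβ
    exact hS.free_of_mem (S.inf_mem A (hS.mem_of_free hα) (hS.mem_of_free hβ))
  · intro A α
    obtain ⟨B, β, hm, he⟩ := hS.2 A α
    exact ⟨B, β, hS.free_of_mem hm, he⟩

theorem two_to_one (hRoC : P.RuleOfChoice)
    (hInf : ∀ (A : C) (α β : P.Fib A), P.IsFree α → P.IsFree β → P.IsFree (α ⊓ β))
    (hE : P.HasEnoughFree) :
    ∃ P' : PrimaryDoctrine.{w} C, Nonempty (IsExtCompletionOf P P') := by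
  classical
  choose Bf βf hfree hcov using hE
  set Q := (P.freeSub hRoC hInf).toPrimary with hQ
  have key : ∀ (A B D : C) (β : P.Fib (A ⊗ B)) (δ : P.Fib (A ⊗ D))
      (hβ : P.IsFree β) (hδ : P.IsFree δ), P.ex A B β ≤ P.ex A D δ →
      extLe (⟨B, ⟨β, hβ⟩⟩ : ExtCarrier Q A) ⟨D, ⟨δ, hδ⟩⟩ := by
    intro A B D β δ hβ hδ h
    obtain ⟨w, hw⟩ := P.split_le_ex (P.isFree_isSplitting hβ) h
    exact ⟨w, hw⟩
  refine ⟨Q, ⟨?_⟩⟩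
  refine
    { toFun := fun A a => ⟨Bf A a, ⟨βf A a, hfree A a⟩⟩
      invFun := fun A x => P.ex A x.1 x.2.1
      toFun_mono := ?_
      invFun_mono := ?_
      left_inv := fun A a => (hcov A a).symm
      right_inv := ?_
      natural := ?_ }
  · intro A a b h
    refine key A _ _ _ _ (hfree A a) (hfree A b) ?_
    rw [← hcov A a, ← hcov A b]
    exact h
  · intro A x y h
    obtain ⟨w, hw⟩ := h
    exact P.ex_le_of_le_reindex w hw
  · rintro A ⟨B, β, hβ⟩
    have h := hcov A (P.ex A B β)
    constructor
    · exact key A _ _ _ _ (hfree A (P.ex A B β)) hβ (le_of_eq h.symm)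
    · exact key A _ _ _ _ hβ (hfree A (P.ex A B β)) (le_of_eq h)
  · intro A' A f a
    have e : lift (fst A' (Bf A a) ≫ f) (snd A' (Bf A a)) = f ▷ (Bf A a) := by
      apply CartesianMonoidalCategory.hom_ext <;> simp
    have h1 : P.ex A' (Bf A a)
        (P.reindex (lift (fst A' (Bf A a) ≫ f) (snd A' (Bf A a))) (βf A a)) =
        P.reindex f a := by
      rw [e, P.ex_bcc, ← hcov A a]
    have h2 := hcov A' (P.reindex f a)
    constructor
    · exact key A' _ _ _ _ (hfree A' (P.reindex f a))
        (P.isFree_reindex (hfree A a) _) (le_of_eq (h2.symm.trans h1.symm))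
    · exact key A' _ _ _ _ (P.isFree_reindex (hfree A a) _)
        (hfree A' (P.reindex f a)) (le_of_eq (h1.trans h2))

end PureExistentialDoctrine
section OneToCover

variable {C : Type u} [Category.{v} C] [CartesianMonoidalCategory C]
variable {P : PureExistentialDoctrine.{w} C} {P' : PrimaryDoctrine.{w} C}

theorem IsExtCompletionOf.exists_cover (Φ : IsExtCompletionOf P P') :
    ∃ S : Subdoctrine P.toPrimaryDoctrine, S.IsCover := by
  have M : ∀ A : C, Set (P.Fib A) := fun A =>
    setOf (fun a => ∃ α'' : P'.Fib (A ⊗ 𝟙_ C), extEquiv (Φ.toFun A a) ⟨𝟙_ C, α''⟩)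
  refine ⟨{ mem := fun A =>
              setOf (fun a => ∃ α'' : P'.Fib (A ⊗ 𝟙_ C),
                extEquiv (Φ.toFun A a) ⟨𝟙_ C, α''⟩),
            top_mem := ?_, inf_mem := ?_, reindex_mem := ?_ }, ?_, ?_⟩
  · -- top
    intro A
    exact ⟨⊤, extLe_top _, (Φ.le_toFun_iff _ _).mpr le_top⟩
  · -- inf
    intro A a b ha hb
    obtain ⟨α, hα⟩ := ha
    obtain ⟨β, hβ⟩ := hb
    have h1 : extEquiv (Φ.toFun A (a ⊓ b)) (extInf (Φ.toFun A a) (Φ.toFun A b)) := by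
      constructor
      · exact le_extInf (Φ.toFun_mono A inf_le_left) (Φ.toFun_mono A inf_le_right)
      · refine (Φ.le_toFun_iff _ _).mpr (le_inf ?_ ?_)
        · have h := Φ.invFun_mono A (extInf_le_left (Φ.toFun A a) (Φ.toFun A b))
          rwa [Φ.left_inv] at h
        · have h := Φ.invFun_mono A (extInf_le_right (Φ.toFun A a) (Φ.toFun A b))
          rwa [Φ.left_inv] at h
    have h2 : extEquiv (extInf (Φ.toFun A a) (Φ.toFun A b))
        (extInf (⟨𝟙_ C, α⟩ : ExtCarrier P' A) ⟨𝟙_ C, β⟩) := by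
      constructor
      · exact le_extInf (extLe_trans (extInf_le_left _ _) hα.1)
          (extLe_trans (extInf_le_right _ _) hβ.1)
      · exact le_extInf (extLe_trans (extInf_le_left _ _) hα.2)
          (extLe_trans (extInf_le_right _ _) hβ.2)
    have h3 := extEquiv_whisker (Q := P') (A := A) (λ_ (𝟙_ C))
      ((extInf (⟨𝟙_ C, α⟩ : ExtCarrier P' A) ⟨𝟙_ C, β⟩).2)
    exact ⟨_, extEquiv_trans (extEquiv_trans h1 h2) h3⟩
  · -- reindex
    intro A B f b hb
    obtain ⟨α, hα⟩ := hb
    refine ⟨P'.reindex (lift (fst A (𝟙_ C) ≫ f) (snd A (𝟙_ C))) α,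
      extEquiv_trans (Φ.natural f b) ?_⟩
    exact ⟨extReindex_mono f hα.1, extReindex_mono f hα.2⟩
  · -- splittings
    rintro A a ⟨α'', hE⟩ B β hβ
    set x := Φ.toFun (A ⊗ B) β with hx
    have hex : extEquiv (Φ.toFun A a) (extEx A B x) := by
      rw [hβ]; exact Φ.toFun_ex β
    obtain ⟨w, hw⟩ := extLe_trans hE.2 hex.1
    simp only [extEx] at w hw
    refine ⟨lift (𝟙 A) (toUnit A) ≫ w ≫ fst B x.1, le_antisymm ?_ ?_⟩
    · -- a ≤ reindex ⟨id, h⟩ β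
      have eu : fst A (𝟙_ C) ≫ lift (𝟙 A) (toUnit A) = 𝟙 (A ⊗ 𝟙_ C) := by
        apply CartesianMonoidalCategory.hom_ext
        · simp
        · exact toUnit_unique _ _
      have hkey : extLe (⟨𝟙_ C, α''⟩ : ExtCarrier P' A)
          (extReindex (lift (𝟙 A) (lift (𝟙 A) (toUnit A) ≫ w ≫ fst B x.1)) x) := by
        refine ⟨w ≫ snd B x.1, ?_⟩
        show α'' ≤ P'.reindex (lift (fst A (𝟙_ C)) (w ≫ snd B x.1))
          (P'.reindex (lift (fst A x.1 ≫
            lift (𝟙 A) (lift (𝟙 A) (toUnit A) ≫ w ≫ fst B x.1)) (snd A x.1)) x.2)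
        have hw' : α'' ≤ P'.reindex (lift (fst A (𝟙_ C)) w)
            (P'.reindex (α_ A B x.1).inv x.2) := hw
        rw [← P'.reindex_comp] at hw' ⊢
        refine hw'.trans (le_of_eq ?_)
        congr 1
        apply CartesianMonoidalCategory.hom_ext
        · apply CartesianMonoidalCategory.hom_ext
          · simp
          · simp [reassoc_of% eu]
        · simp
      have c1 : a ≤ Φ.invFun A (⟨𝟙_ C, α''⟩ : ExtCarrier P' A) := by
        have h := Φ.invFun_mono A hE.1
        rwa [Φ.left_inv] at h
      have c2 := Φ.invFun_mono A hkey
      have c3 := Φ.invFun_mono A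
        (Φ.natural (lift (𝟙 A) (lift (𝟙 A) (toUnit A) ≫ w ≫ fst B x.1)) β).2
      rw [Φ.left_inv] at c3
      exact (c1.trans c2).trans c3
    · rw [hβ]
      exact P.reindex_section_le_ex A B β _
  · -- covers all
    intro A a
    refine ⟨(Φ.toFun A a).1, Φ.invFun _ ⟨𝟙_ C,
      P'.reindex (fst (A ⊗ (Φ.toFun A a).1) (𝟙_ C)) (Φ.toFun A a).2⟩, ?_, ?_⟩
    · exact ⟨_, Φ.right_inv _ _⟩
    · set x := Φ.toFun A a with hx
      set y : ExtCarrier P' (A ⊗ x.1) :=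
        ⟨𝟙_ C, P'.reindex (fst (A ⊗ x.1) (𝟙_ C)) x.2⟩ with hy
      apply le_antisymm
      · refine (Φ.le_iff _ _).mpr ?_
        have s1 : extLe x (extEx A x.1 y) := by
          refine ⟨lift (snd A x.1) (toUnit _), ?_⟩
          show x.2 ≤ P'.reindex (lift (fst A x.1) (lift (snd A x.1) (toUnit _)))
            (P'.reindex (α_ A x.1 (𝟙_ C)).inv (P'.reindex (fst (A ⊗ x.1) (𝟙_ C)) x.2))
          rw [← P'.reindex_comp, ← P'.reindex_comp]
          have e1 : ((lift (fst A x.1) (lift (snd A x.1) (toUnit _)) ≫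
              (α_ A x.1 (𝟙_ C)).inv) ≫ fst (A ⊗ x.1) (𝟙_ C)) = 𝟙 (A ⊗ x.1) := by
            apply CartesianMonoidalCategory.hom_ext <;> simp
          rw [e1, P'.reindex_id]
        exact extLe_trans (extLe_trans s1 (extEx_mono (Φ.right_inv _ y).2))
          (Φ.toFun_ex _).2
      · rw [P.ex_adj]
        have s2 : extLe y (extReindex (fst A x.1) x) := by
          refine ⟨fst (A ⊗ x.1) (𝟙_ C) ≫ snd A x.1, ?_⟩
          show P'.reindex (fst (A ⊗ x.1) (𝟙_ C)) x.2 ≤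
            P'.reindex (lift (fst (A ⊗ x.1) (𝟙_ C)) (fst (A ⊗ x.1) (𝟙_ C) ≫ snd A x.1))
              (P'.reindex (lift (fst (A ⊗ x.1) x.1 ≫ fst A x.1) (snd (A ⊗ x.1) x.1)) x.2)
          rw [← P'.reindex_comp]
          refine le_of_eq ?_
          congr 1
          apply CartesianMonoidalCategory.hom_ext <;> simp
        have s3 := Φ.invFun_mono _ (extLe_trans s2 (Φ.natural (fst A x.1) a).2)
        rwa [Φ.left_inv] at s3

end OneToCover
/-- characterization of pure existential completions.
For a pure existential doctrine `P` the following are equivalent: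
1. `P` is isomorphic to the pure existential completion `(P')^∃` of a primary doctrine `P'`;
2. `P` satisfies the Rule of Choice, binary meets of pure existential free elements are
   pure existential free, and `P` has enough pure existential free elements;
3. `P` has a (unique) pure existential cover;
4. `P` has a (unique) pure existential relative cover. -/
theorem pureExistentialCompletion_characterization {C : Type u} [Category.{v} C]
    [CartesianMonoidalCategory C] (P : PureExistentialDoctrine.{w} C) :
    List.TFAE
      [ ∃ P' : PrimaryDoctrine.{w} C, Nonempty (IsExtCompletionOf P P'),
        P.RuleOfChoice ∧
          (∀ (A : C) (α β : P.Fib A), P.IsFree α → P.IsFree β → P.IsFree (α ⊓ β)) ∧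
          P.HasEnoughFree,
        ∃! S : Subdoctrine P.toPrimaryDoctrine, S.IsCover,
        ∃! S : Subdoctrine P.toPrimaryDoctrine, S.IsRelCover ] := by
  tfae_have 1 → 3 := by
    rintro ⟨P', ⟨Φ⟩⟩
    obtain ⟨S, hS⟩ := Φ.exists_cover
    exact ⟨S, hS, fun T hT => hT.unique hS⟩
  tfae_have 3 → 2 := by
    rintro ⟨S, hS, -⟩
    exact P.cover_to_two hS
  tfae_have 2 → 1 := by
    rintro ⟨hRoC, hInf, hE⟩
    exact P.two_to_one hRoC hInf hE
  tfae_have 3 → 4 := by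
    rintro ⟨S, hS, hU⟩
    exact ⟨S, hS.isRelCover, fun T hT => hU T hT.isCover⟩
  tfae_have 4 → 3 := by
    rintro ⟨S, hS, hU⟩
    exact ⟨S, hS.isCover, fun T hT => hU T hT.isRelCover⟩
  tfae_finish
end

section
/- The pure existential completion P^∃ of a primary doctrine P is elementary if and only if P is elementary. -/
open CategoryTheory MonoidalCategory CartesianMonoidalCategory Limits

universe w v u

section Stmt6

variable {C : Type u} [Category.{v} C] [CartesianMonoidalCategory C]

/-- The pure existential completion `P^∃` of a primary doctrine `P` is **elementary**:
there are fibered equalities `δ_A` in the fibres of the completion providing the prescribed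
left adjoints along diagonals (stated on the carriers, up to the preorder `extLe`). -/
def ExtElementary (P : PrimaryDoctrine.{w} C) : Prop :=
  ∃ d : ∀ A : C, ExtCarrier P (A ⊗ A),
    (∀ (A : C) (x : ExtCarrier P A) (γ : ExtCarrier P (A ⊗ A)),
      extLe (extInf (extReindex (fst A A) x) (d A)) γ ↔
        extLe x (extReindex (lift (𝟙 A) (𝟙 A)) γ)) ∧
    (∀ (X A : C) (x : ExtCarrier P (X ⊗ A)) (γ : ExtCarrier P ((X ⊗ A) ⊗ A)),
      extLe (extInf (extReindex (fst (X ⊗ A) A) x)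
          (extReindex (lift (fst (X ⊗ A) A ≫ snd X A) (snd (X ⊗ A) A)) (d A))) γ ↔
        extLe x (extReindex (lift (𝟙 (X ⊗ A)) (snd X A)) γ))

set_option maxHeartbeats 2000000

namespace ExtProofAux

variable {C : Type u} [Category.{v} C] [CartesianMonoidalCategory C]

lemma fuse (P : PrimaryDoctrine.{w} C) {A B D : C} (f : A ⟶ B) (g : B ⟶ D) (x : P.Fib D) :
    P.reindex f (P.reindex g x) = P.reindex (f ≫ g) x := (P.reindex_comp f g x).symm

lemma rc (P : PrimaryDoctrine.{w} C) {A B : C} {f g : A ⟶ B} (h : f = g) (x : P.Fib B) :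
    P.reindex f x = P.reindex g x := by rw [h]

lemma refl_le (P : PrimaryDoctrine.{w} C) (ES : ElementaryStructure P) (A : C) :
    (⊤ : P.Fib A) ≤ P.reindex (lift (𝟙 A) (𝟙 A)) (ES.delta A) :=
  (ES.delta_adj A ⊤ (ES.delta A)).mp inf_le_right

lemma transport (P : PrimaryDoctrine.{w} C) (ES : ElementaryStructure P) (X A : C)
    (θ : P.Fib (X ⊗ A)) :
    P.reindex (fst (X ⊗ A) A) θ ⊓
      P.reindex (lift (fst (X ⊗ A) A ≫ snd X A) (snd (X ⊗ A) A)) (ES.delta A) ≤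
    P.reindex (lift (fst (X ⊗ A) A ≫ fst X A) (snd (X ⊗ A) A)) θ := by
  refine (ES.delta_adj₂ X A θ _).mpr ?_
  rw [fuse P, rc P (show lift (𝟙 (X ⊗ A)) (snd X A) ≫
      lift (fst (X ⊗ A) A ≫ fst X A) (snd (X ⊗ A) A) = 𝟙 (X ⊗ A) from by ext <;> simp),
    P.reindex_id]

lemma extAdjU (P : PrimaryDoctrine.{w} C) (ES : ElementaryStructure P)
    (U A B Cc : C) (r : U ⟶ A) (α : P.Fib (U ⊗ B)) (g : P.Fib ((U ⊗ A) ⊗ Cc))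
    (δc : P.Fib ((U ⊗ A) ⊗ 𝟙_ C))
    (hδc : δc = P.reindex (fst (U ⊗ A) (𝟙_ C) ≫ lift (fst U A ≫ r) (snd U A)) (ES.delta A)) :
    extLe (extInf (extReindex (fst U A) (⟨B, α⟩ : ExtCarrier P U)) ⟨𝟙_ C, δc⟩)
        (⟨Cc, g⟩ : ExtCarrier P (U ⊗ A)) ↔
    extLe (⟨B, α⟩ : ExtCarrier P U)
        (extReindex (lift (𝟙 U) r) (⟨Cc, g⟩ : ExtCarrier P (U ⊗ A))) := by
  subst hδc
  constructor
  · rintro ⟨w, hw⟩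
    change (U ⊗ A) ⊗ (B ⊗ 𝟙_ C) ⟶ Cc at w
    simp only [extInf, extReindex, extLe, fuse P] at hw
    have hs := P.reindex_mono
      (lift (lift (fst U B) (fst U B ≫ r)) (lift (snd U B) (toUnit (U ⊗ B)))) hw
    rw [P.reindex_inf] at hs
    simp only [fuse P] at hs
    rw [rc P (show lift (lift (fst U B) (fst U B ≫ r)) (lift (snd U B) (toUnit (U ⊗ B))) ≫
          lift (fst (U ⊗ A) (B ⊗ 𝟙_ C)) (snd (U ⊗ A) (B ⊗ 𝟙_ C) ≫ fst B (𝟙_ C)) ≫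
          lift (fst (U ⊗ A) B ≫ fst U A) (snd (U ⊗ A) B) = 𝟙 (U ⊗ B) from by
        ext <;> simp), P.reindex_id] at hs
    rw [rc P (show lift (lift (fst U B) (fst U B ≫ r)) (lift (snd U B) (toUnit (U ⊗ B))) ≫
          lift (fst (U ⊗ A) (B ⊗ 𝟙_ C)) (snd (U ⊗ A) (B ⊗ 𝟙_ C) ≫ snd B (𝟙_ C)) ≫
          fst (U ⊗ A) (𝟙_ C) ≫ lift (fst U A ≫ r) (snd U A) =
          (fst U B ≫ r) ≫ lift (𝟙 A) (𝟙 A) from by ext <;> simp),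
      P.reindex_comp] at hs
    have htop : (⊤ : P.Fib (U ⊗ B)) ≤
        P.reindex (fst U B ≫ r) (P.reindex (lift (𝟙 A) (𝟙 A)) (ES.delta A)) := by
      have h2 := P.reindex_mono (fst U B ≫ r) (refl_le P ES A)
      rwa [P.reindex_top] at h2
    refine ⟨lift (lift (fst U B) (fst U B ≫ r)) (lift (snd U B) (toUnit (U ⊗ B))) ≫ w, ?_⟩
    simp only [extReindex, extLe, fuse P]
    refine le_trans (le_trans (le_inf le_rfl (le_trans le_top htop)) hs) (le_of_eq (rc P ?_ g))
    ext <;> simp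
  · rintro ⟨v, hv⟩
    change U ⊗ B ⟶ Cc at v
    simp only [extInf, extReindex, extLe, fuse P] at hv ⊢
    refine ⟨lift (lift (fst (U ⊗ A) (B ⊗ 𝟙_ C) ≫ fst U A) (snd (U ⊗ A) (B ⊗ 𝟙_ C) ≫ fst B (𝟙_ C)))
        (fst (U ⊗ A) (B ⊗ 𝟙_ C) ≫ snd U A) ≫ fst (U ⊗ B) A ≫ v, ?_⟩
    have hu := P.reindex_mono
      (lift (lift (lift (fst (U ⊗ A) (B ⊗ 𝟙_ C) ≫ fst U A) (snd (U ⊗ A) (B ⊗ 𝟙_ C) ≫ fst B (𝟙_ C)))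
        (fst (U ⊗ A) (B ⊗ 𝟙_ C) ≫ fst U A ≫ r)) (fst (U ⊗ A) (B ⊗ 𝟙_ C) ≫ snd U A))
      (transport P ES (U ⊗ B) A
        (P.reindex (lift (lift (fst (U ⊗ B) A ≫ fst U B) (snd (U ⊗ B) A)) (fst (U ⊗ B) A ≫ v)) g))
    rw [P.reindex_inf] at hu
    simp only [fuse P] at hu
    rw [rc P (show lift (lift (lift (fst (U ⊗ A) (B ⊗ 𝟙_ C) ≫ fst U A) (snd (U ⊗ A) (B ⊗ 𝟙_ C) ≫ fst B (𝟙_ C)))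
          (fst (U ⊗ A) (B ⊗ 𝟙_ C) ≫ fst U A ≫ r)) (fst (U ⊗ A) (B ⊗ 𝟙_ C) ≫ snd U A) ≫
          fst ((U ⊗ B) ⊗ A) A ≫
          lift (lift (fst (U ⊗ B) A ≫ fst U B) (snd (U ⊗ B) A)) (fst (U ⊗ B) A ≫ v) =
          (lift (fst (U ⊗ A) (B ⊗ 𝟙_ C)) (snd (U ⊗ A) (B ⊗ 𝟙_ C) ≫ fst B (𝟙_ C)) ≫
            lift (fst (U ⊗ A) B ≫ fst U A) (snd (U ⊗ A) B)) ≫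
          lift (fst U B) v ≫ lift (fst U Cc ≫ lift (𝟙 U) r) (snd U Cc) from by
        ext <;> simp) g] at hu
    rw [rc P (show lift (lift (lift (fst (U ⊗ A) (B ⊗ 𝟙_ C) ≫ fst U A) (snd (U ⊗ A) (B ⊗ 𝟙_ C) ≫ fst B (𝟙_ C)))
          (fst (U ⊗ A) (B ⊗ 𝟙_ C) ≫ fst U A ≫ r)) (fst (U ⊗ A) (B ⊗ 𝟙_ C) ≫ snd U A) ≫
          lift (fst ((U ⊗ B) ⊗ A) A ≫ snd (U ⊗ B) A) (snd ((U ⊗ B) ⊗ A) A) =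
          lift (fst (U ⊗ A) (B ⊗ 𝟙_ C)) (snd (U ⊗ A) (B ⊗ 𝟙_ C) ≫ snd B (𝟙_ C)) ≫
            fst (U ⊗ A) (𝟙_ C) ≫ lift (fst U A ≫ r) (snd U A) from by
        ext <;> simp) (ES.delta A)] at hu
    rw [rc P (show lift (lift (lift (fst (U ⊗ A) (B ⊗ 𝟙_ C) ≫ fst U A) (snd (U ⊗ A) (B ⊗ 𝟙_ C) ≫ fst B (𝟙_ C)))
          (fst (U ⊗ A) (B ⊗ 𝟙_ C) ≫ fst U A ≫ r)) (fst (U ⊗ A) (B ⊗ 𝟙_ C) ≫ snd U A) ≫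
          lift (fst ((U ⊗ B) ⊗ A) A ≫ fst (U ⊗ B) A) (snd ((U ⊗ B) ⊗ A) A) ≫
          lift (lift (fst (U ⊗ B) A ≫ fst U B) (snd (U ⊗ B) A)) (fst (U ⊗ B) A ≫ v) =
          lift (fst (U ⊗ A) (B ⊗ 𝟙_ C))
            (lift (lift (fst (U ⊗ A) (B ⊗ 𝟙_ C) ≫ fst U A) (snd (U ⊗ A) (B ⊗ 𝟙_ C) ≫ fst B (𝟙_ C)))
              (fst (U ⊗ A) (B ⊗ 𝟙_ C) ≫ snd U A) ≫ fst (U ⊗ B) A ≫ v) from by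
        ext <;> simp) g] at hu
    refine le_trans (inf_le_inf (le_trans (P.reindex_mono _ hv) (le_of_eq (fuse P _ _ g))) le_rfl) hu

lemma ofElementary (P : PrimaryDoctrine.{w} C) (ES : ElementaryStructure P) : ExtElementary P := by
  refine ⟨fun A => ⟨𝟙_ C, P.reindex (fst (A ⊗ A) (𝟙_ C)) (ES.delta A)⟩, ?_, ?_⟩
  · intro A x γ
    have h := extAdjU P ES A A x.1 γ.1 (𝟙 A) x.2 γ.2
      (P.reindex (fst (A ⊗ A) (𝟙_ C)) (ES.delta A))
      (rc P (show fst (A ⊗ A) (𝟙_ C) =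
        fst (A ⊗ A) (𝟙_ C) ≫ lift (fst A A ≫ 𝟙 A) (snd A A) from by ext <;> simp) _)
    exact h
  · intro X A x γ
    have h := extAdjU P ES (X ⊗ A) A x.1 γ.1 (snd X A) x.2 γ.2
      ((extReindex (lift (fst (X ⊗ A) A ≫ snd X A) (snd (X ⊗ A) A))
        (⟨𝟙_ C, P.reindex (fst (A ⊗ A) (𝟙_ C)) (ES.delta A)⟩ : ExtCarrier P (A ⊗ A))).2)
      (by
        simp only [extReindex, fuse P, Category.assoc]
        exact rc P (by ext <;> simp) _)
    exact h

lemma toElementary (P : PrimaryDoctrine.{w} C) (H : ExtElementary P) :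
    Nonempty (ElementaryStructure P) := by
  obtain ⟨d, h1, h2⟩ := H
  have refl' : ∀ A : C, ∃ e : A ⟶ (d A).1,
      (⊤ : P.Fib A) ≤ P.reindex (lift (lift (𝟙 A) (𝟙 A)) e) (d A).2 := by
    intro A
    have hx : extLe (extInf (extReindex (fst A A)
        (⟨𝟙_ C, (⊤ : P.Fib (A ⊗ 𝟙_ C))⟩ : ExtCarrier P A)) (d A)) (d A) := by
      refine ⟨snd (A ⊗ A) (𝟙_ C ⊗ (d A).1) ≫ snd (𝟙_ C) (d A).1, ?_⟩
      exact inf_le_right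
    obtain ⟨w₀, hw₀⟩ := (h1 A ⟨𝟙_ C, ⊤⟩ (d A)).mp hx
    change A ⊗ 𝟙_ C ⟶ (d A).1 at w₀
    refine ⟨lift (𝟙 A) (toUnit A) ≫ w₀, ?_⟩
    replace hw₀ : (⊤ : P.Fib (A ⊗ 𝟙_ C)) ≤ P.reindex (lift (fst A (𝟙_ C)) w₀)
        (P.reindex (lift (fst A (d A).1 ≫ lift (𝟙 A) (𝟙 A)) (snd A (d A).1)) (d A).2) := hw₀
    have h3 := P.reindex_mono (lift (𝟙 A) (toUnit A)) hw₀
    rw [P.reindex_top] at h3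
    simp only [fuse P, Category.assoc] at h3
    refine le_trans h3 (le_of_eq (rc P ?_ _))
    ext <;> simp
  choose e he using refl'
  have coll : ∀ A : C, (d A).2 ≤ P.reindex (fst (A ⊗ A) (d A).1)
      (P.reindex (lift (𝟙 (A ⊗ A)) (fst A A ≫ e A)) (d A).2) := by
    intro A
    have hrhs : extLe (⟨𝟙_ C, (⊤ : P.Fib (A ⊗ 𝟙_ C))⟩ : ExtCarrier P A)
        (extReindex (lift (𝟙 A) (𝟙 A)) ⟨𝟙_ C, P.reindex (fst (A ⊗ A) (𝟙_ C))
          (P.reindex (lift (𝟙 (A ⊗ A)) (fst A A ≫ e A)) (d A).2)⟩) := by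
      simp only [extReindex, extLe, fuse P, Category.assoc]
      refine ⟨toUnit _, ?_⟩
      have h4 := P.reindex_mono (fst A (𝟙_ C)) (he A)
      rw [P.reindex_top] at h4
      simp only [fuse P, Category.assoc] at h4
      refine le_trans h4 (le_of_eq (rc P ?_ _))
      ext <;> simp
    obtain ⟨w, hw⟩ := (h1 A ⟨𝟙_ C, ⊤⟩ ⟨𝟙_ C, P.reindex (fst (A ⊗ A) (𝟙_ C))
      (P.reindex (lift (𝟙 (A ⊗ A)) (fst A A ≫ e A)) (d A).2)⟩).mpr hrhs
    change (A ⊗ A) ⊗ (𝟙_ C ⊗ (d A).1) ⟶ 𝟙_ C at w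
    simp only [extInf, extReindex, extLe, fuse P, Category.assoc] at hw
    simp only [P.reindex_top, top_inf_eq] at hw
    have h5 := P.reindex_mono
      (lift (fst (A ⊗ A) (d A).1) (lift (toUnit ((A ⊗ A) ⊗ (d A).1)) (snd (A ⊗ A) (d A).1))) hw
    simp only [fuse P, Category.assoc] at h5
    rw [rc P (show lift (fst (A ⊗ A) (d A).1) (lift (toUnit ((A ⊗ A) ⊗ (d A).1)) (snd (A ⊗ A) (d A).1)) ≫
        lift (fst (A ⊗ A) (𝟙_ C ⊗ (d A).1)) (snd (A ⊗ A) (𝟙_ C ⊗ (d A).1) ≫ snd (𝟙_ C) (d A).1) =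
        𝟙 ((A ⊗ A) ⊗ (d A).1) from by
      ext <;> first | apply toUnit_unique | simp), P.reindex_id] at h5
    simp only [fuse P, Category.assoc]
    refine le_trans h5 (le_of_eq (rc P ?_ _))
    ext <;> simp
  refine ⟨⟨fun A => P.reindex (lift (𝟙 (A ⊗ A)) (fst A A ≫ e A)) (d A).2, ?_, ?_⟩⟩
  · intro A α γ
    constructor
    · intro hαγ
      have hlhs : extLe (extInf (extReindex (fst A A)
          (⟨𝟙_ C, P.reindex (fst A (𝟙_ C)) α⟩ : ExtCarrier P A)) (d A))
          ⟨𝟙_ C, P.reindex (fst (A ⊗ A) (𝟙_ C)) γ⟩ := by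
        simp only [extInf, extReindex, extLe, fuse P, Category.assoc]
        refine ⟨toUnit _, ?_⟩
        have c2 := P.reindex_mono (lift (fst (A ⊗ A) (𝟙_ C ⊗ (d A).1))
          (snd (A ⊗ A) (𝟙_ C ⊗ (d A).1) ≫ snd (𝟙_ C) (d A).1)) (coll A)
        simp only [fuse P, Category.assoc] at c2
        have c3 := P.reindex_mono (fst (A ⊗ A) (𝟙_ C ⊗ (d A).1)) hαγ
        rw [P.reindex_inf] at c3
        simp only [fuse P, Category.assoc] at c3
        refine le_trans (inf_le_inf (le_of_eq (rc P ?_ α))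
          (le_trans c2 (le_of_eq (rc P ?_ _)))) (le_trans c3 (le_of_eq (rc P ?_ γ)))
        · simp
        · ext <;> simp
        · simp
      obtain ⟨v, hv⟩ := (h1 A ⟨𝟙_ C, P.reindex (fst A (𝟙_ C)) α⟩
        ⟨𝟙_ C, P.reindex (fst (A ⊗ A) (𝟙_ C)) γ⟩).mp hlhs
      change A ⊗ 𝟙_ C ⟶ 𝟙_ C at v
      simp only [extReindex, extLe, fuse P, Category.assoc] at hv
      have h6 := P.reindex_mono (lift (𝟙 A) (toUnit A)) hv
      simp only [fuse P, Category.assoc] at h6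
      rw [rc P (show lift (𝟙 A) (toUnit A) ≫ fst A (𝟙_ C) = 𝟙 A from by simp),
        P.reindex_id] at h6
      refine le_trans h6 (le_of_eq (rc P ?_ γ))
      ext <;> simp
    · intro hγ
      have hrhs : extLe (⟨𝟙_ C, P.reindex (fst A (𝟙_ C)) α⟩ : ExtCarrier P A)
          (extReindex (lift (𝟙 A) (𝟙 A)) ⟨𝟙_ C, P.reindex (fst (A ⊗ A) (𝟙_ C)) γ⟩) := by
        simp only [extReindex, extLe, fuse P, Category.assoc]
        refine ⟨toUnit _, ?_⟩
        have h7 := P.reindex_mono (fst A (𝟙_ C)) hγ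
        simp only [fuse P, Category.assoc] at h7
        refine le_trans h7 (le_of_eq (rc P ?_ γ))
        ext <;> simp
      obtain ⟨w, hw⟩ := (h1 A ⟨𝟙_ C, P.reindex (fst A (𝟙_ C)) α⟩
        ⟨𝟙_ C, P.reindex (fst (A ⊗ A) (𝟙_ C)) γ⟩).mpr hrhs
      change (A ⊗ A) ⊗ (𝟙_ C ⊗ (d A).1) ⟶ 𝟙_ C at w
      simp only [extInf, extReindex, extLe, fuse P, Category.assoc] at hw
      have h8 := P.reindex_mono
        (lift (𝟙 (A ⊗ A)) (lift (toUnit (A ⊗ A)) (fst A A ≫ e A))) hw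
      rw [P.reindex_inf] at h8
      simp only [fuse P, Category.assoc] at h8
      rw [rc P (show lift (𝟙 (A ⊗ A)) (lift (toUnit (A ⊗ A)) (fst A A ≫ e A)) ≫
          lift (fst (A ⊗ A) (𝟙_ C ⊗ (d A).1)) (snd (A ⊗ A) (𝟙_ C ⊗ (d A).1) ≫ fst (𝟙_ C) (d A).1) ≫
          lift (fst (A ⊗ A) (𝟙_ C) ≫ fst A A) (snd (A ⊗ A) (𝟙_ C)) ≫ fst A (𝟙_ C) =
          fst A A from by simp) α] at h8
      rw [rc P (show lift (𝟙 (A ⊗ A)) (lift (toUnit (A ⊗ A)) (fst A A ≫ e A)) ≫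
          lift (fst (A ⊗ A) (𝟙_ C ⊗ (d A).1)) (snd (A ⊗ A) (𝟙_ C ⊗ (d A).1) ≫ snd (𝟙_ C) (d A).1) =
          lift (𝟙 (A ⊗ A)) (fst A A ≫ e A) from by ext <;> simp) ((d A).2)] at h8
      rw [rc P (show lift (𝟙 (A ⊗ A)) (lift (toUnit (A ⊗ A)) (fst A A ≫ e A)) ≫
          lift (fst (A ⊗ A) (𝟙_ C ⊗ (d A).1)) w ≫ fst (A ⊗ A) (𝟙_ C) =
          𝟙 (A ⊗ A) from by simp), P.reindex_id] at h8
      exact h8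
  · intro X A α γ
    constructor
    · intro hαγ
      have hlhs : extLe (extInf (extReindex (fst (X ⊗ A) A)
          (⟨𝟙_ C, P.reindex (fst (X ⊗ A) (𝟙_ C)) α⟩ : ExtCarrier P (X ⊗ A)))
          (extReindex (lift (fst (X ⊗ A) A ≫ snd X A) (snd (X ⊗ A) A)) (d A)))
          ⟨𝟙_ C, P.reindex (fst ((X ⊗ A) ⊗ A) (𝟙_ C)) γ⟩ := by
        simp only [extInf, extReindex, extLe, fuse P, Category.assoc]
        refine ⟨toUnit _, ?_⟩
        have c2 := P.reindex_mono (lift (fst ((X ⊗ A) ⊗ A) (𝟙_ C ⊗ (d A).1) ≫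
            lift (fst (X ⊗ A) A ≫ snd X A) (snd (X ⊗ A) A))
          (snd ((X ⊗ A) ⊗ A) (𝟙_ C ⊗ (d A).1) ≫ snd (𝟙_ C) (d A).1)) (coll A)
        simp only [fuse P, Category.assoc] at c2
        have c3 := P.reindex_mono (fst ((X ⊗ A) ⊗ A) (𝟙_ C ⊗ (d A).1)) hαγ
        rw [P.reindex_inf] at c3
        simp only [fuse P, Category.assoc] at c3
        refine le_trans (inf_le_inf (le_of_eq (rc P ?_ α))
          (le_trans (le_of_eq (rc P ?_ ((d A).2))) (le_trans c2 (le_of_eq (rc P ?_ _)))))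
          (le_trans c3 (le_of_eq (rc P ?_ γ)))
        · simp
        · ext <;> simp
        · ext <;> simp
        · simp
      obtain ⟨v, hv⟩ := (h2 X A ⟨𝟙_ C, P.reindex (fst (X ⊗ A) (𝟙_ C)) α⟩
        ⟨𝟙_ C, P.reindex (fst ((X ⊗ A) ⊗ A) (𝟙_ C)) γ⟩).mp hlhs
      change (X ⊗ A) ⊗ 𝟙_ C ⟶ 𝟙_ C at v
      simp only [extReindex, extLe, fuse P, Category.assoc] at hv
      have h6 := P.reindex_mono (lift (𝟙 (X ⊗ A)) (toUnit (X ⊗ A))) hv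
      simp only [fuse P, Category.assoc] at h6
      rw [rc P (show lift (𝟙 (X ⊗ A)) (toUnit (X ⊗ A)) ≫ fst (X ⊗ A) (𝟙_ C) = 𝟙 (X ⊗ A) from by
        simp), P.reindex_id] at h6
      refine le_trans h6 (le_of_eq (rc P ?_ γ))
      ext <;> simp
    · intro hγ
      have hrhs : extLe (⟨𝟙_ C, P.reindex (fst (X ⊗ A) (𝟙_ C)) α⟩ : ExtCarrier P (X ⊗ A))
          (extReindex (lift (𝟙 (X ⊗ A)) (snd X A))
            ⟨𝟙_ C, P.reindex (fst ((X ⊗ A) ⊗ A) (𝟙_ C)) γ⟩) := by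
        simp only [extReindex, extLe, fuse P, Category.assoc]
        refine ⟨toUnit _, ?_⟩
        have h7 := P.reindex_mono (fst (X ⊗ A) (𝟙_ C)) hγ
        simp only [fuse P, Category.assoc] at h7
        refine le_trans h7 (le_of_eq (rc P ?_ γ))
        ext <;> simp
      obtain ⟨w, hw⟩ := (h2 X A ⟨𝟙_ C, P.reindex (fst (X ⊗ A) (𝟙_ C)) α⟩
        ⟨𝟙_ C, P.reindex (fst ((X ⊗ A) ⊗ A) (𝟙_ C)) γ⟩).mpr hrhs
      change ((X ⊗ A) ⊗ A) ⊗ (𝟙_ C ⊗ (d A).1) ⟶ 𝟙_ C at w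
      simp only [extInf, extReindex, extLe, fuse P, Category.assoc] at hw
      have h8 := P.reindex_mono (lift (𝟙 ((X ⊗ A) ⊗ A))
        (lift (toUnit ((X ⊗ A) ⊗ A)) (fst (X ⊗ A) A ≫ snd X A ≫ e A))) hw
      rw [P.reindex_inf] at h8
      simp only [fuse P, Category.assoc] at h8
      rw [rc P (show lift (𝟙 ((X ⊗ A) ⊗ A)) (lift (toUnit ((X ⊗ A) ⊗ A)) (fst (X ⊗ A) A ≫ snd X A ≫ e A)) ≫
          lift (fst ((X ⊗ A) ⊗ A) (𝟙_ C ⊗ (d A).1)) (snd ((X ⊗ A) ⊗ A) (𝟙_ C ⊗ (d A).1) ≫ fst (𝟙_ C) (d A).1) ≫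
          lift (fst ((X ⊗ A) ⊗ A) (𝟙_ C) ≫ fst (X ⊗ A) A) (snd ((X ⊗ A) ⊗ A) (𝟙_ C)) ≫ fst (X ⊗ A) (𝟙_ C) =
          fst (X ⊗ A) A from by simp) α] at h8
      rw [rc P (show lift (𝟙 ((X ⊗ A) ⊗ A)) (lift (toUnit ((X ⊗ A) ⊗ A)) (fst (X ⊗ A) A ≫ snd X A ≫ e A)) ≫
          lift (fst ((X ⊗ A) ⊗ A) (𝟙_ C ⊗ (d A).1)) (snd ((X ⊗ A) ⊗ A) (𝟙_ C ⊗ (d A).1) ≫ snd (𝟙_ C) (d A).1) ≫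
          lift (fst ((X ⊗ A) ⊗ A) (d A).1 ≫ lift (fst (X ⊗ A) A ≫ snd X A) (snd (X ⊗ A) A)) (snd ((X ⊗ A) ⊗ A) (d A).1) =
          lift (fst (X ⊗ A) A ≫ snd X A) (snd (X ⊗ A) A) ≫ lift (𝟙 (A ⊗ A)) (fst A A ≫ e A)
          from by ext <;> simp) ((d A).2)] at h8
      rw [rc P (show lift (𝟙 ((X ⊗ A) ⊗ A)) (lift (toUnit ((X ⊗ A) ⊗ A)) (fst (X ⊗ A) A ≫ snd X A ≫ e A)) ≫
          lift (fst ((X ⊗ A) ⊗ A) (𝟙_ C ⊗ (d A).1)) w ≫ fst ((X ⊗ A) ⊗ A) (𝟙_ C) =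
          𝟙 ((X ⊗ A) ⊗ A) from by simp), P.reindex_id] at h8
      simp only [fuse P, Category.assoc]
      exact h8

end ExtProofAux

/-- The pure existential completion `P^∃` of a primary doctrine `P` is
elementary if and only if `P` is elementary. -/
theorem extCompletion_elementary_iff (P : PrimaryDoctrine.{w} C) :
    ExtElementary P ↔ Nonempty (ElementaryStructure P) :=
  ⟨fun h => ExtProofAux.toElementary P h, fun h => ExtProofAux.ofElementary P h.some⟩

end Stmt6
end

section
/- Let P : Cᵒᵖ → InfSL be an elementary pure existential doctrine. If φ : (A,α) → (B,β) is an arrow of the regular completion Reg(P) and α is a pure existential splitting element of P, then there exists an arrow f : A → B in C such that α = P_{⟨id_A,f⟩}(φ) and α ≤ P_f(β); moreover, for every arrow g : A → B with α = P_{⟨id_A,g⟩}(φ) one has α ≤ P_{⟨f,g⟩}(δ_B). -/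
open CategoryTheory MonoidalCategory CartesianMonoidalCategory Limits

universe w v u

section Stmt9

variable {C : Type u} [Category.{v} C] [CartesianMonoidalCategory C]

/-- An arrow `(A, α) ⟶ (B, β)` of the regular completion `Reg(P)` of an elementary pure
existential doctrine is an element `φ ∈ P(A ⊗ B)` which is bounded by the predicates,
entire and functional. -/
structure IsRegHom (P : PureExistentialDoctrine.{w} C)
    (E : ElementaryStructure P.toPrimaryDoctrine)
    {A B : C} (α : P.Fib A) (β : P.Fib B) (φ : P.Fib (A ⊗ B)) : Prop where
  le_left : φ ≤ P.reindex (fst A B) α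
  le_right : φ ≤ P.reindex (snd A B) β
  entire : α ≤ P.ex A B φ
  functional :
    P.reindex (fst (A ⊗ B) B) φ ⊓
      P.reindex (lift (fst (A ⊗ B) B ≫ fst A B) (snd (A ⊗ B) B)) φ ≤
    P.reindex (lift (fst (A ⊗ B) B ≫ snd A B) (snd (A ⊗ B) B)) (E.delta B)

/-- **Statement 9.** If `φ : (A, α) ⟶ (B, β)` is an arrow of the regular completion
`Reg(P)` and `α` is a pure existential splitting element of `P`, then there is an arrow
`f : A ⟶ B` of `C` with `α = P_{⟨id_A, f⟩}(φ)` and `α ≤ P_f(β)`; moreover for every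
`g : A ⟶ B` with `α = P_{⟨id_A, g⟩}(φ)` one has `α ≤ P_{⟨f, g⟩}(δ_B)`. -/
theorem regHom_tracked_of_splitting (P : PureExistentialDoctrine.{w} C)
    (E : ElementaryStructure P.toPrimaryDoctrine) {A B : C}
    (α : P.Fib A) (β : P.Fib B) (φ : P.Fib (A ⊗ B))
    (hφ : IsRegHom P E α β φ) (hα : P.IsSplitting α) :
    ∃ f : A ⟶ B, α = P.reindex (lift (𝟙 A) f) φ ∧ α ≤ P.reindex f β ∧
      ∀ g : A ⟶ B, α = P.reindex (lift (𝟙 A) g) φ →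
        α ≤ P.reindex (lift f g) (E.delta B) := by
  -- α = ∃ (P_{π₁} α ⊓ φ) by Frobenius
  have hfrob : P.ex A B (P.reindex (fst A B) α ⊓ φ) = α ⊓ P.ex A B φ :=
    P.ex_frob A B α φ
  have hα' : α = P.ex A B (P.reindex (fst A B) α ⊓ φ) := by
    rw [hfrob, inf_eq_left.mpr hφ.entire]
  obtain ⟨f, hf⟩ := hα B _ hα'
  rw [P.reindex_inf] at hf
  have hcomp1 : P.reindex (lift (𝟙 A) f) (P.reindex (fst A B) α) = α := by
    rw [← P.reindex_comp, lift_fst, P.reindex_id]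
  rw [hcomp1] at hf
  have hle : α ≤ P.reindex (lift (𝟙 A) f) φ := by
    rw [hf]; exact inf_le_right
  have hge : P.reindex (lift (𝟙 A) f) φ ≤ α := by
    have := P.reindex_mono (lift (𝟙 A) f) hφ.le_left
    rwa [hcomp1] at this
  have heq : α = P.reindex (lift (𝟙 A) f) φ := le_antisymm hle hge
  refine ⟨f, heq, ?_, ?_⟩
  · have := P.reindex_mono (lift (𝟙 A) f) hφ.le_right
    rw [← P.reindex_comp, lift_snd] at this
    exact heq ▸ this
  · intro g hg
    have hfun := P.reindex_mono (lift (lift (𝟙 A) f) g) hφ.functional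
    rw [P.reindex_inf, ← P.reindex_comp, ← P.reindex_comp, ← P.reindex_comp] at hfun
    have e1 : lift (lift (𝟙 A) f) g ≫ fst (A ⊗ B) B = lift (𝟙 A) f := by simp
    have e2 : lift (lift (𝟙 A) f) g ≫
        lift (fst (A ⊗ B) B ≫ fst A B) (snd (A ⊗ B) B) = lift (𝟙 A) g := by
      apply CartesianMonoidalCategory.hom_ext <;> simp
    have e3 : lift (lift (𝟙 A) f) g ≫
        lift (fst (A ⊗ B) B ≫ snd A B) (snd (A ⊗ B) B) = lift f g := by
      apply CartesianMonoidalCategory.hom_ext <;> simp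
    rw [e1, e2, e3, ← heq, ← hg, inf_idem] at hfun
    exact hfun

end Stmt9
end
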